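/- arXiv:2110.12997 — 2 statements merged into one kernel-verified Lean document; each statement's English description precedes it below -/
import Mathlib

section
/- Let α be a nonempty finite type and let p, q, r, r' be probability mass functions on α that are strictly positive everywhere. Let β > 0, ε > 0, and L ≥ 0 be real numbers. Assume: (i) the likelihood-ratio identity p(a)/r(a) = q(a)/r'(a) holds for every a ∈ α; (ii) |log(p(a)/r(a))| ≤ L for every a ∈ α; and (iii) KL(p‖q) ≤ ε/β. Then |KL(p‖r) − KL(q‖r')| ≤ √(2ε/β) · L. (This is Lemma 2 of the paper: a policy whose trajectory distributions in the source and target environments are within ε/β in KL divergence induces joint distributions that are similarly close to the respective desired distributions, where p, q play the roles of the source- and target-induced joint distributions of goal and trajectory, r, r' the desired joint distributions, and the ratio identity encodes that the transition-dynamics factors cancel in the likelihood ratios.) -/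
open Finset

/-- Kullback–Leibler divergence between two mass functions on a finite type,
with the convention that terms with `p a = 0` contribute `0`
(automatic here since `0 * log (0 / q a) = 0`). -/
noncomputable def KL {α : Type*} [Fintype α] (p q : α → ℝ) : ℝ :=
  ∑ a, p a * Real.log (p a / q a)

/-!
Because `p / r = q / r'`, the difference `KL p r - KL q r'` equals `∑ (p - q) log (p / r)`, which
is at most `L` times the `ℓ¹` distance of `p` and `q`; Pinsker's inequality
`‖p - q‖₁ ≤ √(2 KL(p‖q))` then gives the bound. Pinsker's inequality follows from the pointwise
bound `3 (x - 1)² / (x + 2) ≤ 2 klFun x` by Sedrakyan's form of Cauchy–Schwarz with the weights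
`(p + 2q) / 3`, which sum to `1`.
-/

open Real InformationTheory

lemma isMinOn_of_hasDerivAt_of_sub_mul_nonneg {f f' : ℝ → ℝ} {s : Set ℝ} {c : ℝ}
    (hs : s.OrdConnected) (hc : c ∈ s) (hf : ∀ x ∈ s, HasDerivAt f (f' x) x)
    (hf' : ∀ x ∈ s, 0 ≤ (x - c) * f' x) : IsMinOn f s c := by
  intro x hx
  show f c ≤ f x
  have hcont : ContinuousOn f s := fun y hy => (hf y hy).continuousAt.continuousWithinAt
  rcases lt_trichotomy x c with hlt | rfl | hgt
  · have hxc : Set.Icc x c ⊆ s := hs.out hx hc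
    obtain ⟨d, hd, hslope⟩ := exists_hasDerivAt_eq_slope f f' hlt (hcont.mono hxc)
      fun d hd => hf d (hxc (Set.Ioo_subset_Icc_self hd))
    have hd' : f' d ≤ 0 :=
      nonpos_of_mul_nonneg_right (hf' d (hxc (Set.Ioo_subset_Icc_self hd))) (by linarith [hd.2])
    rw [hslope, div_nonpos_iff] at hd'
    rcases hd' with h | h <;> linarith [h.1, h.2]
  · exact le_rfl
  · have hcx : Set.Icc c x ⊆ s := hs.out hc hx
    obtain ⟨d, hd, hslope⟩ := exists_hasDerivAt_eq_slope f f' hgt (hcont.mono hcx)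
      fun d hd => hf d (hcx (Set.Ioo_subset_Icc_self hd))
    have hd' : 0 ≤ f' d :=
      nonneg_of_mul_nonneg_right (hf' d (hcx (Set.Ioo_subset_Icc_self hd))) (by linarith [hd.1])
    rw [hslope, div_nonneg_iff] at hd'
    rcases hd' with h | h <;> linarith [h.1, h.2]

lemma sub_one_mul_div_le_log {x : ℝ} (hx : 0 < x) :
    (x - 1) * (5 * x + 1) / (2 * x * (x + 2)) ≤ log x := by
  have hderiv (y : ℝ) (hy : 0 < y) :
      HasDerivAt (fun y => log y - (y - 1) * (5 * y + 1) / (2 * y * (y + 2)))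
        ((y - 1) ^ 3 / (y ^ 2 * (y + 2) ^ 2)) y := by
    have hnum : HasDerivAt (fun y : ℝ => (y - 1) * (5 * y + 1)) (10 * y - 4) y :=
      (((hasDerivAt_id y).sub_const 1).mul
        (((hasDerivAt_id y).const_mul 5).add_const 1)).congr_deriv (by simp only [id]; ring)
    have hden : HasDerivAt (fun y : ℝ => 2 * y * (y + 2)) (4 * y + 4) y :=
      (((hasDerivAt_id y).const_mul 2).mul ((hasDerivAt_id y).add_const 2)).congr_deriv
        (by simp only [id]; ring)
    refine ((hasDerivAt_log hy.ne').sub (hnum.div hden (by positivity))).congr_deriv ?_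
    field_simp
    ring
  have hmin := isMinOn_of_hasDerivAt_of_sub_mul_nonneg Set.ordConnected_Ioi
    (Set.mem_Ioi.2 one_pos) hderiv fun y (hy : 0 < y) => by
      rw [← mul_div_assoc, ← pow_succ']
      exact div_nonneg (Even.pow_nonneg (by decide) _) (by positivity)
  have h := isMinOn_iff.1 hmin x hx
  norm_num at h
  linarith

lemma three_mul_sq_div_le_two_mul_klFun {x : ℝ} (hx : 0 < x) :
    3 * (x - 1) ^ 2 / (x + 2) ≤ 2 * klFun x := by
  have h := mul_le_mul_of_nonneg_left (sub_one_mul_div_le_log hx) (by positivity : 0 ≤ 2 * x)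
  have : 2 * x * ((x - 1) * (5 * x + 1) / (2 * x * (x + 2)))
      = 3 * (x - 1) ^ 2 / (x + 2) + 2 * (x - 1) := by
    field_simp
    ring
  rw [klFun_apply]; linarith

lemma mul_klFun_div {p q : ℝ} (hq : q ≠ 0) : q * klFun (p / q) = p * log (p / q) + q - p := by
  rw [klFun_apply]
  field_simp

lemma three_mul_sq_sub_div_le_two_mul_mul_klFun {p q : ℝ} (hp : 0 < p) (hq : 0 < q) :
    3 * (p - q) ^ 2 / (p + 2 * q) ≤ 2 * (q * klFun (p / q)) := by
  have h := mul_le_mul_of_nonneg_left (three_mul_sq_div_le_two_mul_klFun (div_pos hp hq)) hq.le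
  have : q * (3 * (p / q - 1) ^ 2 / (p / q + 2)) = 3 * (p - q) ^ 2 / (p + 2 * q) := by
    field_simp
  linarith

section KLDivergence

variable {α : Type*} [Fintype α] {p q : α → ℝ}

lemma KL_sub_KL_eq_sum_of_div_eq {r r' : α → ℝ} (hratio : ∀ a, p a / r a = q a / r' a) :
    KL p r - KL q r' = ∑ a, (p a - q a) * log (p a / r a) := by
  simp only [KL, ← sum_sub_distrib, hratio, sub_mul]

lemma sum_mul_klFun_div_eq_KL (hq_pos : ∀ a, 0 < q a) (hp_sum : ∑ a, p a = 1)
    (hq_sum : ∑ a, q a = 1) : ∑ a, q a * klFun (p a / q a) = KL p q := by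
  simp only [KL, mul_klFun_div (hq_pos _).ne', sum_sub_distrib, sum_add_distrib, hp_sum, hq_sum,
    add_sub_cancel_right]

theorem sq_sum_abs_sub_le_two_mul_KL (hp_pos : ∀ a, 0 < p a) (hp_sum : ∑ a, p a = 1)
    (hq_pos : ∀ a, 0 < q a) (hq_sum : ∑ a, q a = 1) :
    (∑ a, |p a - q a|) ^ 2 ≤ 2 * KL p q := by
  have hw_pos : ∀ a ∈ univ, 0 < (p a + 2 * q a) / 3 := fun a _ => by
    have := hp_pos a; have := hq_pos a; positivity
  have hw_sum : ∑ a, (p a + 2 * q a) / 3 = 1 := by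
    rw [← sum_div, sum_add_distrib, ← mul_sum, hp_sum, hq_sum]; norm_num
  calc (∑ a, |p a - q a|) ^ 2
      = (∑ a, |p a - q a|) ^ 2 / ∑ a, (p a + 2 * q a) / 3 := by rw [hw_sum, div_one]
    _ ≤ ∑ a, |p a - q a| ^ 2 / ((p a + 2 * q a) / 3) := sq_sum_div_le_sum_sq_div _ _ hw_pos
    _ = ∑ a, 3 * (p a - q a) ^ 2 / (p a + 2 * q a) := by
        simp only [sq_abs, div_div_eq_mul_div, mul_comm]
    _ ≤ ∑ a, 2 * (q a * klFun (p a / q a)) :=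
        sum_le_sum fun a _ => three_mul_sq_sub_div_le_two_mul_mul_klFun (hp_pos a) (hq_pos a)
    _ = 2 * KL p q := by rw [← mul_sum, sum_mul_klFun_div_eq_KL hq_pos hp_sum hq_sum]

end KLDivergence

theorem lemma2_policy_near_optimality_transfer_general
    {α : Type*} [Fintype α]
    (p q r r' : α → ℝ)
    (hp_pos : ∀ a, 0 < p a) (hp_sum : ∑ a, p a = 1)
    (hq_pos : ∀ a, 0 < q a) (hq_sum : ∑ a, q a = 1)
    (β ε L : ℝ) (hL : 0 ≤ L)
    (hratio : ∀ a, p a / r a = q a / r' a)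
    (hlog_bound : ∀ a, |Real.log (p a / r a)| ≤ L)
    (hKL : KL p q ≤ ε / β) :
    |KL p r - KL q r'| ≤ Real.sqrt (2 * ε / β) * L := by
  have htv : ∑ a, |p a - q a| ≤ √(2 * ε / β) := by
    refine le_sqrt_of_sq_le ((sq_sum_abs_sub_le_two_mul_KL hp_pos hp_sum hq_pos hq_sum).trans ?_)
    rw [mul_div_assoc]; linarith
  calc |KL p r - KL q r'| = |∑ a, (p a - q a) * log (p a / r a)| := by
        rw [KL_sub_KL_eq_sum_of_div_eq hratio]
    _ ≤ ∑ a, |p a - q a| * L := by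
        refine (abs_sum_le_sum_abs _ _).trans (sum_le_sum fun a _ => ?_)
        rw [abs_mul]
        exact mul_le_mul_of_nonneg_left (hlog_bound a) (abs_nonneg _)
    _ = (∑ a, |p a - q a|) * L := (sum_mul _ _ _).symm
    _ ≤ √(2 * ε / β) * L := mul_le_mul_of_nonneg_right htv hL

/-- Lemma 2 of the paper: if the likelihood ratios `p/r` and `q/r'` coincide,
their logs are bounded by `L`, and `KL(p‖q) ≤ ε/β`, then the two KL divergences
to the respective desired distributions differ by at most `√(2ε/β)·L`. -/
theorem lemma2_policy_near_optimality_transfer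
    {α : Type*} [Fintype α] [Nonempty α]
    (p q r r' : α → ℝ)
    (hp_pos : ∀ a, 0 < p a) (hp_sum : ∑ a, p a = 1)
    (hq_pos : ∀ a, 0 < q a) (hq_sum : ∑ a, q a = 1)
    (hr_pos : ∀ a, 0 < r a) (hr_sum : ∑ a, r a = 1)
    (hr'_pos : ∀ a, 0 < r' a) (hr'_sum : ∑ a, r' a = 1)
    (β ε L : ℝ) (hβ : 0 < β) (hε : 0 < ε) (hL : 0 ≤ L)
    (hratio : ∀ a, p a / r a = q a / r' a)
    (hlog_bound : ∀ a, |Real.log (p a / r a)| ≤ L)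
    (hKL : KL p q ≤ ε / β) :
    |KL p r - KL q r'| ≤ Real.sqrt (2 * ε / β) * L :=
  lemma2_policy_near_optimality_transfer_general p q r r' hp_pos hp_sum hq_pos hq_sum β ε L hL
    hratio hlog_bound hKL
end

section
/- Let S, A be nonempty finite types, and let p_S, p_T : S × A × S → ℝ be two probability mass functions on the finite type S × A × S (joint distributions over transitions drawn from source and target buffers). For X ∈ {S, T} define the (s,a)-marginal m_X(s,a) = ∑_{s'} p_X(s,a,s') and, where m_X(s,a) > 0, the conditional P_X(s'|s,a) = p_X(s,a,s') / m_X(s,a). Define the Bayes-optimal classifiers under an equal mixture: q^{sas}(source | s,a,s') = p_S(s,a,s') / (p_S(s,a,s') + p_T(s,a,s')), q^{sas}(target | s,a,s') = p_T(s,a,s') / (p_S(s,a,s') + p_T(s,a,s')), q^{sa}(source | s,a) = m_S(s,a) / (m_S(s,a) + m_T(s,a)), and q^{sa}(target | s,a) = m_T(s,a) / (m_S(s,a) + m_T(s,a)). Then for every (s, a, s') with p_S(s,a,s') > 0 and p_T(s,a,s') > 0, the reward modification satisfies: log P_S(s'|s,a) − log P_T(s'|s,a) = log( q^{sas}(source|s,a,s')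 / q^{sas}(target|s,a,s') ) − log( q^{sa}(source|s,a) / q^{sa}(target|s,a) ). (This is the Bayes'-rule identity of Section 3.5 expressing Δr via the two classifiers.) -/
/-!
Under an equal mixture the normaliser `p_S + p_T` cancels from the odds of each
Bayes-optimal classifier, so the two classifiers report the likelihood ratios
`p_S / p_T` and `m_S / m_T`. Bayes' rule `P_X = p_X / m_X` then splits the log
ratio of the conditionals into exactly these two log ratios.
-/

open Finset

lemma Real.log_div_sub_log_div_eq {x y m n : ℝ} (hx : x ≠ 0) (hy : y ≠ 0) (hm : m ≠ 0)
    (hn : n ≠ 0) :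
    Real.log (x / m) - Real.log (y / n) = Real.log (x / y) - Real.log (m / n) := by
  simp only [Real.log_div, hx, hy, hm, hn, ne_eq, not_false_eq_true]
  ring

lemma Finset.sum_univ_pos_of_nonneg_of_pos {ι M : Type*} [Fintype ι] [AddCommMonoid M]
    [PartialOrder M] [IsOrderedCancelAddMonoid M] {f : ι → M} (hf : ∀ i, 0 ≤ f i)
    {j : ι} (hj : 0 < f j) : 0 < ∑ i, f i :=
  sum_pos' (fun i _ => hf i) ⟨j, mem_univ j, hj⟩

theorem delta_r_via_classifiers_general
    {S A : Type*} [Fintype S] [Fintype A]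
    (pS pT : S × A × S → ℝ)
    (hpS_nonneg : ∀ x, 0 ≤ pS x)
    (hpT_nonneg : ∀ x, 0 ≤ pT x)
    (s : S) (a : A) (s' : S)
    (hS_pos : 0 < pS (s, a, s')) (hT_pos : 0 < pT (s, a, s')) :
    Real.log (pS (s, a, s') / ∑ u, pS (s, a, u))
      - Real.log (pT (s, a, s') / ∑ u, pT (s, a, u))
    = Real.log ((pS (s, a, s') / (pS (s, a, s') + pT (s, a, s')))
        / (pT (s, a, s') / (pS (s, a, s') + pT (s, a, s'))))
      - Real.log (((∑ u, pS (s, a, u)) / ((∑ u, pS (s, a, u)) + (∑ u, pT (s, a, u))))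
        / ((∑ u, pT (s, a, u)) / ((∑ u, pS (s, a, u)) + (∑ u, pT (s, a, u))))) := by
  have hmS : 0 < ∑ u, pS (s, a, u) :=
    sum_univ_pos_of_nonneg_of_pos (fun u => hpS_nonneg (s, a, u)) hS_pos
  have hmT : 0 < ∑ u, pT (s, a, u) :=
    sum_univ_pos_of_nonneg_of_pos (fun u => hpT_nonneg (s, a, u)) hT_pos
  rw [div_div_div_cancel_right₀ (add_pos hS_pos hT_pos).ne',
    div_div_div_cancel_right₀ (add_pos hmS hmT).ne']
  exact Real.log_div_sub_log_div_eq hS_pos.ne' hT_pos.ne' hmS.ne' hmT.ne'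

/-- The Bayes'-rule identity of Section 3.5: the reward modification
`Δr = log P_S(s'|s,a) − log P_T(s'|s,a)` equals the difference between the
log-ratios of the Bayes-optimal `(s,a,s')`-classifier and `(s,a)`-classifier
under an equal mixture of source and target transition distributions. -/
theorem delta_r_via_classifiers
    {S A : Type*} [Fintype S] [Fintype A] [Nonempty S] [Nonempty A]
    (pS pT : S × A × S → ℝ)
    (hpS_nonneg : ∀ x, 0 ≤ pS x) (hpS_sum : ∑ x, pS x = 1)
    (hpT_nonneg : ∀ x, 0 ≤ pT x) (hpT_sum : ∑ x, pT x = 1)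
    (s : S) (a : A) (s' : S)
    (hS_pos : 0 < pS (s, a, s')) (hT_pos : 0 < pT (s, a, s')) :
    Real.log (pS (s, a, s') / ∑ u, pS (s, a, u))
      - Real.log (pT (s, a, s') / ∑ u, pT (s, a, u))
    = Real.log ((pS (s, a, s') / (pS (s, a, s') + pT (s, a, s')))
        / (pT (s, a, s') / (pS (s, a, s') + pT (s, a, s'))))
      - Real.log (((∑ u, pS (s, a, u)) / ((∑ u, pS (s, a, u)) + (∑ u, pT (s, a, u))))
        / ((∑ u, pT (s, a, u)) / ((∑ u, pS (s, a, u)) + (∑ u, pT (s, a, u))))) :=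
  delta_r_via_classifiers_general pS pT hpS_nonneg hpT_nonneg s a s' hS_pos hT_pos
end
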